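/- arXiv:1601.04295 — 6 statements merged into one kernel-verified Lean document; each statement's English description precedes it below -/
import Mathlib

section
/- Let S be a transformation semigroup on a finite set Ω containing an element t of minimal rank r (where rank means cardinality of the image). Then the image of t is a clique of size r in the kernel graph Gr(S), and the map t is a proper r-coloring of Gr(S); consequently the clique number of Gr(S) equals its chromatic number. -/
/-! A map `f` of rank at least that of `t` on `t`'s image cannot merge two points of that image.
So if `t` has minimal rank in `S`, every `f ∈ S` is injective on `im t` (as `f ∘ t ∈ S`), which
makes `im t` a clique; and `t` itself properly colours `Gr(S)` with the colours `im t`. Hence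
`ω ≥ |im t| ≥ χ ≥ ω`. -/

def kerGraph {Ω : Type*} (S : Set (Ω → Ω)) : SimpleGraph Ω where
  Adj v w := v ≠ w ∧ ∀ f ∈ S, f v ≠ f w
  symm := ⟨fun v w h => ⟨h.1.symm, fun f hf => (h.2 f hf).symm⟩⟩
  loopless := ⟨fun v h => h.1 rfl⟩

open Finset

theorem Finset.injOn_image_of_card_image_le_card_image_comp {α β γ : Type*} [DecidableEq β]
    [DecidableEq γ] {s : Finset α} {t : α → β} {f : β → γ}
    (h : #(s.image t) ≤ #(s.image (f ∘ t))) : Set.InjOn f (s.image t) := by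
  rw [← image_image] at h
  exact card_image_iff.mp (card_image_le.antisymm h)

namespace kerGraph

variable {Ω : Type*} {S : Set (Ω → Ω)}

theorem Adj.apply_ne {f : Ω → Ω} (hf : f ∈ S) {v w : Ω} (h : (kerGraph S).Adj v w) :
    f v ≠ f w :=
  h.2 f hf

variable [Fintype Ω] [DecidableEq Ω]

def coloringOfMem {f : Ω → Ω} (hf : f ∈ S) : (kerGraph S).Coloring (univ.image f) :=
  SimpleGraph.Coloring.mk (fun v => ⟨f v, mem_image_of_mem f (mem_univ v)⟩)
    fun h heq => Adj.apply_ne hf h (congrArg Subtype.val heq)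

theorem chromaticNumber_le_card_image {f : Ω → Ω} (hf : f ∈ S) :
    (kerGraph S).chromaticNumber ≤ #(univ.image f) := by
  simpa only [Fintype.card_coe] using (coloringOfMem hf).colorable.chromaticNumber_le

theorem isClique_image_of_minimal_rank {t : Ω → Ω} (hcomp : ∀ f ∈ S, f ∘ t ∈ S)
    (hmin : ∀ f ∈ S, #(univ.image t) ≤ #(univ.image f)) :
    (kerGraph S).IsClique (univ.image t) := by
  intro v hv w hw hvw
  refine ⟨hvw, fun f hf hfvw => hvw ?_⟩
  exact injOn_image_of_card_image_le_card_image_comp (hmin _ (hcomp f hf)) hv hw hfvw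

end kerGraph

/-- if t has minimal rank r in S, then the image of t is a clique
of size r in Gr(S), t is a proper r-coloring, and χ(Gr(S)) = ω(Gr(S)) = r. -/
theorem stmt1 {Ω : Type*} [Fintype Ω] [DecidableEq Ω] (S : Set (Ω → Ω))
    (hcomp : ∀ f ∈ S, ∀ g ∈ S, (f ∘ g) ∈ S)
    (t : Ω → Ω) (ht : t ∈ S)
    (hmin : ∀ f ∈ S, (Finset.univ.image t).card ≤ (Finset.univ.image f).card) :
    (kerGraph S).IsNClique (Finset.univ.image t).card (Finset.univ.image t) ∧
    (∀ v w, (kerGraph S).Adj v w → t v ≠ t w) ∧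
    (kerGraph S).chromaticNumber = ((Finset.univ.image t).card : ℕ∞) := by
  have hclique := kerGraph.isClique_image_of_minimal_rank (fun f hf => hcomp f hf t ht) hmin
  refine ⟨⟨hclique, rfl⟩, fun _ _ h => kerGraph.Adj.apply_ne ht h, ?_⟩
  exact (kerGraph.chromaticNumber_le_card_image ht).antisymm hclique.card_le_chromaticNumber
end

section
/- Let X be a simple graph on a finite vertex set. Then every automorphism of X is an automorphism of Hull(X), and every endomorphism of X is an endomorphism of Hull(X). -/
/-- `f` is an endomorphism of the simple graph `X`. -/
def isEnd {V : Type*} (X : SimpleGraph V) (f : V → V) : Prop :=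
  ∀ v w, X.Adj v w → X.Adj (f v) (f w)

/-- The hull of a graph: the kernel graph of its endomorphism monoid. -/
def hull {V : Type*} (X : SimpleGraph V) : SimpleGraph V :=
  kerGraph {f | isEnd X f}

/-- `f` is an automorphism of `X`. -/
def isAut {V : Type*} (X : SimpleGraph V) (f : V → V) : Prop :=
  Function.Bijective f ∧ ∀ v w, X.Adj v w ↔ X.Adj (f v) (f w)

/-! If an endomorphism `g` identified `f v` and `f w`, the endomorphism `g ∘ f` would identify
`v` and `w`; so endomorphisms of `X` preserve adjacency in the hull. The inverse of an
automorphism is again an endomorphism, which gives the reverse implication. -/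

open Function

section

variable {V : Type*} {X : SimpleGraph V} {f g : V → V}

lemma isEnd.comp (hg : isEnd X g) (hf : isEnd X f) : isEnd X (g ∘ f) :=
  fun _ _ h => hg _ _ (hf _ _ h)

lemma isEnd.hull (hf : isEnd X f) : isEnd (hull X) f :=
  fun _ _ hvw => ⟨hvw.2 f hf, fun g hg => hvw.2 (g ∘ f) (isEnd.comp hg hf)⟩

lemma isAut.toIsEnd (hf : isAut X f) : isEnd X f :=
  fun v w => (hf.2 v w).1

lemma isAut.exists_leftInverse_isEnd (hf : isAut X f) :
    ∃ g, LeftInverse g f ∧ isEnd X g := by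
  refine ⟨surjInv hf.1.2, leftInverse_surjInv hf.1, fun v w h => ?_⟩
  rwa [hf.2, surjInv_eq hf.1.2, surjInv_eq hf.1.2]

lemma isAut_of_leftInverse (hbij : Bijective f) (hgf : LeftInverse g f) (hf : isEnd X f)
    (hg : isEnd X g) : isAut X f := by
  refine ⟨hbij, fun v w => ⟨hf v w, fun h => ?_⟩⟩
  simpa only [hgf v, hgf w] using hg _ _ h

lemma isAut.hull (hf : isAut X f) : isAut (hull X) f := by
  obtain ⟨g, hgf, hg⟩ := hf.exists_leftInverse_isEnd
  exact isAut_of_leftInverse hf.1 hgf hf.toIsEnd.hull hg.hull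

end

theorem stmt5_general {V : Type*} (X : SimpleGraph V) :
    (∀ f : V → V, isAut X f → isAut (hull X) f) ∧
    (∀ f : V → V, isEnd X f → isEnd (hull X) f) :=
  ⟨fun _ hf => hf.hull, fun _ hf => hf.hull⟩

/-- Aut(X) ≤ Aut(Hull(X)) and End(X) ≤ End(Hull(X)). -/
theorem stmt5 {V : Type*} [Fintype V] (X : SimpleGraph V) :
    (∀ f : V → V, isAut X f → isAut (hull X) f) ∧
    (∀ f : V → V, isEnd X f → isEnd (hull X) f) :=
  stmt5_general X
end

section
/- Let S be a transformation semigroup on a finite set Ω that is a semilattice (every element is idempotent and S is commutative), and let b be the product of all elements of S. Then Gr(S) = Gr({b}). -/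
private lemma foldComm {Ω : Type*} (S : Finset (Ω → Ω))
    (hcommut : ∀ f ∈ S, ∀ g ∈ S, f ∘ g = g ∘ f)
    (f : Ω → Ω) (hf : f ∈ S) :
    ∀ l : List (Ω → Ω), (∀ g ∈ l, g ∈ S) →
      f ∘ l.foldr (· ∘ ·) id = l.foldr (· ∘ ·) id ∘ f := by
  intro l
  induction l with
  | nil => simp
  | cons g t ih =>
      intro hl
      have hg : g ∈ S := hl g (by simp)
      have ht : ∀ x ∈ t, x ∈ S := fun x hx => hl x (by simp [hx])
      have h1 : f ∘ g = g ∘ f := hcommut f hf g hg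
      calc f ∘ (g :: t).foldr (· ∘ ·) id
          = (f ∘ g) ∘ t.foldr (· ∘ ·) id := by
            simp [Function.comp_assoc]
        _ = (g ∘ f) ∘ t.foldr (· ∘ ·) id := by rw [h1]
        _ = g ∘ (f ∘ t.foldr (· ∘ ·) id) := by rw [Function.comp_assoc]
        _ = g ∘ (t.foldr (· ∘ ·) id ∘ f) := by rw [ih ht]
        _ = (g :: t).foldr (· ∘ ·) id ∘ f := by
            simp [Function.comp_assoc]

private lemma foldAbsorb {Ω : Type*} (S : Finset (Ω → Ω))
    (hidem : ∀ f ∈ S, f ∘ f = f)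
    (hcommut : ∀ f ∈ S, ∀ g ∈ S, f ∘ g = g ∘ f)
    (f : Ω → Ω) (hf : f ∈ S) :
    ∀ l : List (Ω → Ω), (∀ g ∈ l, g ∈ S) → f ∈ l →
      l.foldr (· ∘ ·) id ∘ f = l.foldr (· ∘ ·) id := by
  intro l
  induction l with
  | nil => simp
  | cons g t ih =>
      intro hl hfl
      have hg : g ∈ S := hl g (by simp)
      have ht : ∀ x ∈ t, x ∈ S := fun x hx => hl x (by simp [hx])
      rcases List.mem_cons.mp hfl with h | h
      · subst h
        calc (f :: t).foldr (· ∘ ·) id ∘ f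
            = f ∘ (t.foldr (· ∘ ·) id ∘ f) := by simp [Function.comp_assoc]
          _ = f ∘ (f ∘ t.foldr (· ∘ ·) id) := by
              rw [foldComm S hcommut f hf t ht]
          _ = (f ∘ f) ∘ t.foldr (· ∘ ·) id := by rw [Function.comp_assoc]
          _ = f ∘ t.foldr (· ∘ ·) id := by rw [hidem f hf]
          _ = (f :: t).foldr (· ∘ ·) id := by simp
      · calc (g :: t).foldr (· ∘ ·) id ∘ f
            = g ∘ (t.foldr (· ∘ ·) id ∘ f) := by simp [Function.comp_assoc]
          _ = g ∘ t.foldr (· ∘ ·) id := by rw [ih ht h]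
          _ = (g :: t).foldr (· ∘ ·) id := by simp

private lemma foldMem {Ω : Type*} (S : Finset (Ω → Ω))
    (hcomp : ∀ f ∈ S, ∀ g ∈ S, (f ∘ g) ∈ S) :
    ∀ l : List (Ω → Ω), (∀ g ∈ l, g ∈ S) → l ≠ [] →
      l.foldr (· ∘ ·) id ∈ S := by
  intro l
  induction l with
  | nil => intro _ h; exact absurd rfl h
  | cons g t ih =>
      intro hl _
      have hg : g ∈ S := hl g (by simp)
      have ht : ∀ x ∈ t, x ∈ S := fun x hx => hl x (by simp [hx])
      rcases t with _ | ⟨a, t'⟩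
      · simpa using hg
      · have := ih ht (by simp)
        simpa using hcomp g hg _ this

/-- for a semilattice S of transformations (all idempotent and
commuting), letting b be the composite of all elements of S, Gr(S) = Gr({b}). -/
theorem stmt12 {Ω : Type*} [Fintype Ω] (S : Finset (Ω → Ω))
    (hcomp : ∀ f ∈ S, ∀ g ∈ S, (f ∘ g) ∈ S)
    (hidem : ∀ f ∈ S, f ∘ f = f)
    (hcommut : ∀ f ∈ S, ∀ g ∈ S, f ∘ g = g ∘ f)
    (b : Ω → Ω) (hb : b = S.toList.foldr (· ∘ ·) id) :
    kerGraph (S : Set (Ω → Ω)) = kerGraph {b} := by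
  have hlist : ∀ g ∈ S.toList, g ∈ S := fun g hg => Finset.mem_toList.mp hg
  ext v w
  simp only [kerGraph, Set.mem_singleton_iff, Finset.mem_coe]
  constructor
  · rintro ⟨hvw, h⟩
    refine ⟨hvw, ?_⟩
    intro f hf
    rw [hf]
    rcases eq_or_ne S ∅ with hS | hS
    · subst hS
      simp only [Finset.toList_empty, List.foldr_nil] at hb
      subst hb
      exact hvw
    · have hne : S.toList ≠ [] := by
        simp [Finset.toList_eq_nil, hS]
      have hbS : b ∈ S := hb ▸ foldMem S hcomp S.toList hlist hne
      exact h b hbS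
  · rintro ⟨hvw, h⟩
    refine ⟨hvw, ?_⟩
    intro f hf hfvw
    have hfl : f ∈ S.toList := Finset.mem_toList.mpr hf
    have habs := foldAbsorb S hidem hcommut f hf S.toList hlist hfl
    have : b v = b w := by
      rw [hb, ← habs]
      simp [Function.comp, hfvw]
    exact h b rfl this
end

section
/- For n ≥ 2, let X = n·K_r be the disjoint union of n copies of the complete graph K_r (r ≥ 2). Then Hull(X) = X, i.e., X is a hull: two distinct vertices are collapsed by some endomorphism of X iff they are non-adjacent in X. -/
/-- The disjoint union of n copies of K_r. -/
def unionCompleteGraphs (n r : ℕ) : SimpleGraph (Fin n × Fin r) where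
  Adj v w := v.1 = w.1 ∧ v.2 ≠ w.2
  symm := ⟨fun v w h => ⟨h.1.symm, h.2.symm⟩⟩
  loopless := ⟨fun v h => h.2 rfl⟩

/-
An endomorphism maps adjacent vertices to adjacent, hence distinct, vertices, so it
never collapses an edge. Conversely, distinct non-adjacent vertices `v`, `w` lie in different
copies of `K_r`; folding the copy of `w` onto the copy of `v` by a bijection sending `w` to `v`,
and fixing everything else, is an endomorphism collapsing `v` and `w`.
-/

theorem isEnd.map_ne_of_adj {V : Type*} {X : SimpleGraph V} {f : V → V} (hf : isEnd X f)
    {v w : V} (h : X.Adj v w) : f v ≠ f w :=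
  (hf v w h).ne

namespace unionCompleteGraphs

variable {n r : ℕ}

theorem fst_ne_of_not_adj {v w : Fin n × Fin r} (hvw : v ≠ w)
    (h : ¬ (unionCompleteGraphs n r).Adj v w) : v.1 ≠ w.1 := fun h₁ =>
  h ⟨h₁, fun h₂ => hvw (Prod.ext h₁ h₂)⟩

def foldCopy (v w : Fin n × Fin r) (p : Fin n × Fin r) : Fin n × Fin r :=
  if p.1 = w.1 then (v.1, Equiv.swap w.2 v.2 p.2) else p

theorem isEnd_foldCopy (v w : Fin n × Fin r) : isEnd (unionCompleteGraphs n r) (foldCopy v w) := by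
  rintro ⟨i, a⟩ ⟨j, b⟩ ⟨rfl, hab⟩
  by_cases h : i = w.1
  · simp only [foldCopy, h, if_true]
    exact ⟨rfl, (Equiv.swap w.2 v.2).injective.ne hab⟩
  · simp only [foldCopy, h, if_false]
    exact ⟨rfl, hab⟩

theorem foldCopy_left {v w : Fin n × Fin r} (h : v.1 ≠ w.1) : foldCopy v w v = v := by
  simp [foldCopy, h]

theorem foldCopy_right (v w : Fin n × Fin r) : foldCopy v w w = v := by
  simp [foldCopy]

end unionCompleteGraphs

theorem stmt14_general (n r : ℕ) :
    ∀ v w : Fin n × Fin r, v ≠ w →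
      ((∃ f, isEnd (unionCompleteGraphs n r) f ∧ f v = f w) ↔
        ¬ (unionCompleteGraphs n r).Adj v w) := by
  intro v w hvw
  constructor
  · rintro ⟨f, hf, hcollapse⟩ hadj
    exact hf.map_ne_of_adj hadj hcollapse
  · intro hna
    refine ⟨unionCompleteGraphs.foldCopy v w, unionCompleteGraphs.isEnd_foldCopy v w, ?_⟩
    rw [unionCompleteGraphs.foldCopy_left (unionCompleteGraphs.fst_ne_of_not_adj hvw hna),
      unionCompleteGraphs.foldCopy_right]

/-- n.K_r is a hull: two distinct vertices are collapsed by some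
endomorphism iff they are non-adjacent. -/
theorem stmt14 (n r : ℕ) (hn : 2 ≤ n) (hr : 2 ≤ r) :
    ∀ v w : Fin n × Fin r, v ≠ w →
      ((∃ f, isEnd (unionCompleteGraphs n r) f ∧ f v = f w) ↔
        ¬ (unionCompleteGraphs n r).Adj v w) :=
  stmt14_general n r
end

section
/- Let Cₙ be the cycle graph on n vertices with n even, n ≥ 6. Then Hull(Cₙ) is the complete bipartite graph K_{n/2,n/2} with parts the even-indexed and odd-indexed vertices: two distinct vertices of Cₙ are collapsed by some endomorphism iff their indices have the same parity. -/
/-- The cycle graph on ZMod n. -/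
def cycleGraph (n : ℕ) : SimpleGraph (ZMod n) where
  Adj i j := i ≠ j ∧ (j = i + 1 ∨ j = i - 1)
  symm := by
    constructor
    rintro i j ⟨h1, h2 | h2⟩
    · exact ⟨h1.symm, Or.inr (by rw [h2]; ring)⟩
    · exact ⟨h1.symm, Or.inl (by rw [h2]; ring)⟩
  loopless := ⟨fun i h => h.1 rfl⟩

namespace cycleGraph

variable {n : ℕ}

abbrev parity (hn : 2 ∣ n) : ZMod n →+* ZMod 2 := ZMod.castHom hn (ZMod 2)

lemma parity_eq_zero_iff_even (hn : 2 ∣ n) (x : ZMod n) : parity hn x = 0 ↔ Even x := by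
  constructor
  · obtain ⟨k, rfl⟩ := ZMod.intCast_surjective x
    rw [map_intCast, ZMod.intCast_zmod_eq_zero_iff_dvd]
    rintro ⟨m, rfl⟩
    exact ⟨m, by push_cast; ring⟩
  · rintro ⟨r, rfl⟩
    rw [map_add, ← two_mul, show (2 : ZMod 2) = 0 from rfl, zero_mul]

lemma parity_of_adj (hn : 2 ∣ n) {x y : ZMod n} (hxy : (cycleGraph n).Adj x y) :
    parity hn y = parity hn x + 1 := by
  rcases hxy.2 with rfl | rfl
  · rw [map_add, map_one]
  · rw [map_sub, map_one, sub_eq_add_neg, show (-1 : ZMod 2) = 1 from rfl]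

lemma adj_add_one (hn : 2 ∣ n) (x : ZMod n) : (cycleGraph n).Adj x (x + 1) := by
  refine ⟨fun h => one_ne_zero (α := ZMod 2) ?_, Or.inl rfl⟩
  rw [← map_one (parity hn), left_eq_add.mp h, map_zero]

lemma parity_apply_of_isEnd (hn : 2 ∣ n) {f : ZMod n → ZMod n} (hf : isEnd (cycleGraph n) f)
    (x : ZMod n) :
    parity hn (f x) = parity hn (f 0) + parity hn x := by
  obtain ⟨k, rfl⟩ := ZMod.intCast_surjective x
  induction k using Int.induction_on with
  | zero => simp
  | succ k ih =>
    push_cast at ih ⊢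
    rw [parity_of_adj hn (hf _ _ (adj_add_one hn _)), ih, map_add, map_one, add_assoc]
  | pred k ih =>
    set y : ZMod n := ((-(k : ℤ) - 1 : ℤ) : ZMod n)
    have hy : (↑(-(k : ℤ)) : ZMod n) = y + 1 := by simp [y]
    rw [hy, parity_of_adj hn (hf _ _ (adj_add_one hn y)), map_add, map_one, ← add_assoc] at ih
    exact add_right_cancel ih

def parityFold (hn : 2 ∣ n) (x : ZMod n) : ZMod n :=
  if parity hn x = 0 then 0 else 1

lemma isEnd_parityFold (hn : 2 ∣ n) : isEnd (cycleGraph n) (parityFold hn) := by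
  intro x y hxy
  have h01 : (cycleGraph n).Adj 0 1 := by simpa using adj_add_one hn 0
  have hy := parity_of_adj hn hxy
  obtain hx | hx : parity hn x = 0 ∨ parity hn x = 1 := by
    generalize parity hn x = a
    revert a
    decide
  · simpa [parityFold, hx, hy] using h01
  · rw [hx, show (1 + 1 : ZMod 2) = 0 from rfl] at hy
    simpa [parityFold, hx, hy] using h01.symm

end cycleGraph

theorem stmt16_general (n : ℕ) (hn : Even n) :
    ∀ v w : ZMod n, v ≠ w →
      ((∃ f, isEnd (cycleGraph n) f ∧ f v = f w) ↔ Even (v - w)) := by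
  intro v w _
  have h2 := hn.two_dvd
  rw [← cycleGraph.parity_eq_zero_iff_even h2, map_sub, sub_eq_zero]
  constructor
  · rintro ⟨f, hf, hfvw⟩
    have hv := cycleGraph.parity_apply_of_isEnd h2 hf v
    rw [hfvw, cycleGraph.parity_apply_of_isEnd h2 hf w] at hv
    exact (add_left_cancel hv).symm
  · intro h
    exact ⟨cycleGraph.parityFold h2, cycleGraph.isEnd_parityFold h2,
      by simp only [cycleGraph.parityFold, h]⟩

/-- for even n ≥ 6, the hull of C_n is the complete bipartite
graph on the even- and odd-indexed vertices: two distinct vertices are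
collapsed by some endomorphism iff their difference is even. -/
theorem stmt16 (n : ℕ) (hn : Even n) (hn6 : 6 ≤ n) :
    ∀ v w : ZMod n, v ≠ w →
      ((∃ f, isEnd (cycleGraph n) f ∧ f v = f w) ↔ Even (v - w)) :=
  stmt16_general n hn
end

section
/- Let Y be a finite graph that is a core. Then the complement of Y is a core if and only if the complement of the disjoint union n·Y (n copies of Y, n ≥ 1) is a core. -/
/-- A finite graph is a core if every endomorphism is an automorphism. -/
def isCore {V : Type*} (X : SimpleGraph V) : Prop :=
  ∀ f, isEnd X f → Function.Bijective f

/-- The disjoint union of n copies of the graph Y. -/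
def nCopies {V : Type*} (n : ℕ) (Y : SimpleGraph V) : SimpleGraph (Fin n × V) where
  Adj v w := v.1 = w.1 ∧ Y.Adj v.2 w.2
  symm := ⟨fun v w h => ⟨h.1.symm, h.2.symm⟩⟩
  loopless := ⟨fun v h => Y.loopless.irrefl _ h.2⟩

open Function
open scoped Nat

namespace Function

variable {α : Type*}

theorem iterate_card_mem_periodicPts [Fintype α] (f : α → α) (x : α) :
    f^[Fintype.card α] x ∈ periodicPts f := by
  obtain ⟨i, j, hij, heq⟩ := Fintype.exists_ne_map_eq_of_card_lt
    (fun i : Fin (Fintype.card α + 1) => f^[i] x) (by simp)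
  wlog hlt : i < j generalizing i j
  · exact this j i hij.symm heq.symm (lt_of_le_of_ne (not_lt.mp hlt) hij.symm)
  have hperiodic : f^[i] x ∈ periodicPts f := by
    refine mk_mem_periodicPts (n := j - i) (by omega) ?_
    change f^[j - i] (f^[i] x) = f^[i] x
    rw [← iterate_add_apply, Nat.sub_add_cancel hlt.le]
    exact heq.symm
  have hcard : Fintype.card α = (Fintype.card α - i) + i := by omega
  rw [hcard, iterate_add_apply]
  exact (bijOn_periodicPts f).mapsTo.iterate _ hperiodic

theorem iterate_factorial_card_idem [Fintype α] (f : α → α) (x : α) :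
    f^[(Fintype.card α)!] (f^[(Fintype.card α)!] x) = f^[(Fintype.card α)!] x := by
  apply isPeriodicPt_factorial_card_of_mem_periodicPts
  rw [← Nat.sub_add_cancel (Nat.self_le_factorial (Fintype.card α)), iterate_add_apply]
  exact (bijOn_periodicPts f).mapsTo.iterate _ (iterate_card_mem_periodicPts f x)

theorem Injective.of_iterate {f : α → α} {t : ℕ} (ht : 0 < t) (h : Injective f^[t]) :
    Injective f := by
  obtain ⟨s, rfl⟩ : ∃ s, t = s + 1 := ⟨t - 1, by omega⟩
  rw [iterate_succ] at h
  exact h.of_comp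

end Function

section Endomorphisms

variable {V : Type*} {X : SimpleGraph V} {f r : V → V}

theorem isEnd.iterate (hf : isEnd X f) (t : ℕ) : isEnd X f^[t] := by
  induction t with
  | zero => exact fun _ _ h => h
  | succ t ih =>
    intro v w hvw
    rw [iterate_succ_apply', iterate_succ_apply']
    exact hf _ _ (ih v w hvw)

theorem isEnd.not_adj_apply_of_idem (hr : isEnd X r) (hidem : ∀ x, r (r x) = r x) (x : V) :
    ¬ X.Adj x (r x) := fun hadj => X.loopless.irrefl _ (hidem x ▸ hr _ _ hadj)

theorem isCore_of_forall_idem [Fintype V]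
    (h : ∀ r, isEnd X r → (∀ x, r (r x) = r x) → Bijective r) : isCore X := by
  intro f hf
  have hr := h _ (hf.iterate _) (iterate_factorial_card_idem f)
  exact Finite.injective_iff_bijective.mp (hr.1.of_iterate (Nat.factorial_pos _))

end Endomorphisms

def fiberMap {ι V : Type*} (θ : ι → V → V) (p : ι × V) : ι × V := (p.1, θ p.1 p.2)

theorem bijective_fiberMap_iff {ι V : Type*} (θ : ι → V → V) :
    Bijective (fiberMap θ) ↔ ∀ i, Bijective (θ i) := by
  refine ⟨fun h i => ⟨fun a b hab => ?_, fun c => ?_⟩, fun h => ?_⟩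
  · have : fiberMap θ (i, a) = fiberMap θ (i, b) := by simp [fiberMap, hab]
    exact congrArg Prod.snd (h.1 this)
  · obtain ⟨⟨j, a⟩, ha⟩ := h.2 (i, c)
    obtain rfl : j = i := congrArg Prod.fst ha
    exact ⟨a, congrArg Prod.snd ha⟩
  · exact (Equiv.prodCongrRight fun i => Equiv.ofBijective _ (h i)).bijective

section Copies

variable {V : Type*} {n : ℕ} {Y : SimpleGraph V}

theorem compl_nCopies_adj (p q : Fin n × V) :
    (nCopies n Y)ᶜ.Adj p q ↔ p.1 ≠ q.1 ∨ Yᶜ.Adj p.2 q.2 := by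
  simp only [SimpleGraph.compl_adj, nCopies, ne_eq, Prod.ext_iff]
  tauto

theorem isEnd_compl_nCopies_fiberMap_iff (θ : Fin n → V → V) :
    isEnd (nCopies n Y)ᶜ (fiberMap θ) ↔ ∀ i, isEnd Yᶜ (θ i) := by
  simp only [isEnd, compl_nCopies_adj, fiberMap]
  refine ⟨fun h i a b hab => ?_, fun h p q hpq => ?_⟩
  · simpa using h (i, a) (i, b) (Or.inr hab)
  · by_cases hfst : p.1 = q.1
    · obtain ⟨i, a⟩ := p
      obtain ⟨j, b⟩ := q
      obtain rfl : i = j := hfst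
      exact Or.inr (h i a b (hpq.resolve_left (not_not.mpr rfl)))
    · exact Or.inl hfst

theorem eq_fiberMap_of_isEnd_compl_nCopies {r : Fin n × V → Fin n × V}
    (hr : isEnd (nCopies n Y)ᶜ r) (hidem : ∀ p, r (r p) = r p) :
    r = fiberMap fun i a => (r (i, a)).2 := by
  funext p
  have hfst : (r p).1 = p.1 := by
    by_contra hne
    exact hr.not_adj_apply_of_idem hidem p ((compl_nCopies_adj _ _).mpr (Or.inl (Ne.symm hne)))
  exact Prod.ext hfst rfl

theorem isCore_compl_nCopies_of_isCore_compl [Fintype V] (hY : isCore Yᶜ) :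
    isCore (nCopies n Y)ᶜ := by
  refine isCore_of_forall_idem fun r hr hidem => ?_
  have hfiber := eq_fiberMap_of_isEnd_compl_nCopies hr hidem
  rw [hfiber] at hr ⊢
  rw [isEnd_compl_nCopies_fiberMap_iff] at hr
  exact (bijective_fiberMap_iff _).mpr fun i => hY _ (hr i)

theorem isCore_compl_of_isCore_compl_nCopies (hn : 0 < n) (h : isCore (nCopies n Y)ᶜ) :
    isCore Yᶜ := by
  intro g hg
  have hend : isEnd (nCopies n Y)ᶜ (fiberMap fun _ => g) :=
    (isEnd_compl_nCopies_fiberMap_iff _).mpr fun _ => hg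
  exact (bijective_fiberMap_iff _).mp (h _ hend) ⟨0, hn⟩

end Copies

theorem stmt18_general {V : Type*} [Fintype V] (Y : SimpleGraph V)
    (n : ℕ) (hn : 1 ≤ n) :
    isCore Yᶜ ↔ isCore (nCopies n Y)ᶜ :=
  ⟨isCore_compl_nCopies_of_isCore_compl, isCore_compl_of_isCore_compl_nCopies hn⟩

/-- for a finite core Y and n ≥ 1, the complement of Y is a core
iff the complement of n.Y is a core. -/
theorem stmt18 {V : Type*} [Fintype V] (Y : SimpleGraph V) (hY : isCore Y)
    (n : ℕ) (hn : 1 ≤ n) :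
    isCore Yᶜ ↔ isCore (nCopies n Y)ᶜ :=
  stmt18_general Y n hn
end
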